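/- Consider the decomposition of the criss-cross cycle cost into the two matchings μ̃₁ = π̃∘σ̃⁻¹ and μ̃₂ = π̃∘τ⁻¹∘σ̃⁻¹, with matching cost E[m(μ)] = Σ_{i=1}^N (r_i − b_{μ(i)})² for uniform order statistics. If N is odd, then E[E[m(μ̃₁)]] = E[E[m(μ̃₂)]] = (N² + 4N − 3) / (3(N+1)²). If N is even, then the matching with two fixed points has average cost (N² + 4N − 6) / (3(N+1)²) while the matching with no fixed points has average cost (N² + 4N) / (3(N+1)²). -/

import Mathlib

/-- The criss-cross permutation σ̃ of {1,…,N}, written 0-indexed: position `i`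
(1-indexed `i+1`) is sent to `2*i` when `2*i < N` (1-indexed: `σ̃(j)=2j-1` for
`j ≤ (N+1)/2`) and to `2*(N-1-i)+1` otherwise (1-indexed: `σ̃(j)=2N-2j+2` for
`j > (N+1)/2`). -/
noncomputable def sigmaTilde (N : ℕ) : Equiv.Perm (Fin N) :=
  Equiv.ofBijective
    (fun i => if h : 2 * i.val < N then ⟨2 * i.val, h⟩
      else ⟨2 * (N - 1 - i.val) + 1, by have := i.isLt; omega⟩)
    (Finite.injective_iff_bijective.mp (by
      intro a b hab
      have ha := a.isLt; have hb := b.isLt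
      by_cases h1 : 2 * a.val < N <;> by_cases h2 : 2 * b.val < N <;>
        simp only [h1, h2, dif_pos, dif_neg, not_false_iff, Fin.mk.injEq, Fin.ext_iff] at hab ⊢ <;>
        omega))

/-- The criss-cross permutation π̃ = σ̃ ∘ I, where `I = Fin.revPerm` is the inversion
`I(j) = N+1-j` (0-indexed: `i ↦ N-1-i`).  Here `(f * g) i = f (g i)`. -/
noncomputable def piTilde (N : ℕ) : Equiv.Perm (Fin N) := sigmaTilde N * Fin.revPerm

open MeasureTheory

/-- The law of a pair of two independent samples of `N` i.i.d. points uniformly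
distributed on `[0,1]` (red sample, blue sample). -/
noncomputable def unifPair (N : ℕ) : Measure ((Fin N → ℝ) × (Fin N → ℝ)) :=
  (Measure.pi fun _ : Fin N => volume.restrict (Set.Icc (0:ℝ) 1)).prod
    (Measure.pi fun _ : Fin N => volume.restrict (Set.Icc (0:ℝ) 1))

/-- The increasing order statistics of a finite sample `x`. -/
noncomputable def orderStat {N : ℕ} (x : Fin N → ℝ) : Fin N → ℝ := x ∘ Tuple.sort x

/-- The cost of the assignment associated with the permutation `μ`, for cost exponent
`p = 2`: `E[m(μ)] = Σ_i (r_i − b_{μ(i)})²`, where `r`, `b` are the increasing order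
statistics of the two samples. -/
noncomputable def matchingCostSq (N : ℕ) (μ : Equiv.Perm (Fin N))
    (q : (Fin N → ℝ) × (Fin N → ℝ)) : ℝ :=
  ∑ i : Fin N, (orderStat q.1 i - orderStat q.2 (μ i)) ^ 2

/-!
Write `r_i` for the `i`-th order statistic (0-indexed) of `N` uniform points and `m_i = E r_i`.
Expanding the square and using independence of the two samples,
`E (r_i - b_j)² = Var r_i + Var b_j + (m_i - m_j)²`, so every matching `μ` has average cost
`2 ∑ Var r_i + ∑ (m_i - m_{μ i})²`. The mean comes from the layer-cake formula:
`t < r_i` exactly when at most `i` points lie below `t`, an event of probability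
`∑_{k ≤ i} C(N,k) t^k (1-t)^(N-k)`, and each of these Bernstein polynomials integrates to
`1/(N+1)`; hence `m_i = (i+1)/(N+1)`, and `∑ E r_i² = ∑ E x_j² = N/3` gives
`2 ∑ Var r_i = N/(3(N+1))`.

The two criss-cross matchings are the conjugates by `σ̃` of the reflections `I` and `I ∘ τ⁻¹`
of the `N`-cycle, and `σ̃` turns each reflection into a permutation moving every point by at
most one place. So `∑ (i - μ i)²` counts the points that are moved: `N` minus the number of
fixed points of the reflection, which is one if `N` is odd, and zero for `I`, two for
`I ∘ τ⁻¹` if `N` is even.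
-/

open MeasureTheory ProbabilityTheory Finset
open scoped Nat

local notation "unifIcc" => volume.restrict (Set.Icc (0 : ℝ) 1)

instance : IsProbabilityMeasure unifIcc := ⟨by simp⟩

theorem integral_pow_mul_one_sub_pow (k n : ℕ) :
    ∫ t in (0 : ℝ)..1, t ^ k * (1 - t) ^ n = k ! * n ! / (k + n + 1)! := by
  induction n generalizing k with
  | zero =>
    simp [integral_pow, Nat.factorial_succ]
    field_simp
  | succ n ih =>
    have hu : ∀ t ∈ Set.uIcc (0 : ℝ) 1,
        HasDerivAt (fun t : ℝ => (1 - t) ^ (n + 1)) (-((n + 1) * (1 - t) ^ n)) t := fun t _ =>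
      (((hasDerivAt_id t).const_sub 1).fun_pow (n + 1)).congr_deriv (by simp)
    have hv : ∀ t ∈ Set.uIcc (0 : ℝ) 1,
        HasDerivAt (fun t : ℝ => t ^ (k + 1) / (k + 1)) (t ^ k) t := fun t _ =>
      ((hasDerivAt_pow (k + 1) t).div_const ((k : ℝ) + 1)).congr_deriv (by simp [field])
    have ibp := intervalIntegral.integral_mul_deriv_eq_deriv_mul hu hv
      (Continuous.intervalIntegrable (by fun_prop) _ _)
      (Continuous.intervalIntegrable (by fun_prop) _ _)
    have hrw : ∀ t : ℝ, -((n + 1) * (1 - t) ^ n) * (t ^ (k + 1) / (k + 1))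
        = -((n + 1) / (k + 1) * (t ^ (k + 1) * (1 - t) ^ n)) := fun t => by ring
    simp_rw [hrw, intervalIntegral.integral_neg, intervalIntegral.integral_const_mul, ih] at ibp
    simp_rw [mul_comm (_ ^ k), ibp, show k + 1 + n = k + (n + 1) by ring, Nat.factorial_succ]
    push_cast
    field_simp
    simp

theorem integral_choose_mul_pow_mul_one_sub_pow {n k : ℕ} (hk : k ≤ n) :
    ∫ t in (0 : ℝ)..1, (n.choose k : ℝ) * (t ^ k * (1 - t) ^ (n - k)) = 1 / (n + 1) := by
  have hfac : (n.choose k * k ! * (n - k)! : ℝ) = n ! := by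
    exact_mod_cast Nat.choose_mul_factorial_mul_factorial hk
  rw [intervalIntegral.integral_const_mul, integral_pow_mul_one_sub_pow,
    show k + (n - k) + 1 = n + 1 by omega, Nat.factorial_succ]
  push_cast
  field_simp
  linear_combination hfac

theorem Monotone.lt_iff_card_filter_le {α : Type*} [LinearOrder α] {n : ℕ} {r : Fin n → α}
    (hr : Monotone r) (i : Fin n) (t : α) : t < r i ↔ #{k | r k ≤ t} ≤ i := by
  constructor
  · intro hi
    calc #{k | r k ≤ t} ≤ #(Iio i) := card_le_card fun k hk => by
          simp only [mem_filter, mem_univ, true_and] at hk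
          exact mem_Iio.mpr (lt_of_not_ge fun hik => (hi.trans_le (hr hik)).not_ge hk)
      _ = i := Fin.card_Iio i
  · intro hcard
    by_contra! hi
    have : #(Iic i) ≤ #{k | r k ≤ t} := card_le_card fun k hk => by
      simpa using (hr (mem_Iic.mp hk)).trans hi
    rw [Fin.card_Iic] at this
    omega

theorem Finset.sum_filter_card_le {α M : Type*} [Fintype α] [AddCommMonoid M] (f : ℕ → M)
    {i : ℕ} (hi : i ≤ Fintype.card α) :
    ∑ S : Finset α with #S ≤ i, f #S = ∑ k ∈ range (i + 1), (Fintype.card α).choose k • f k := by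
  rw [sum_filter, ← powerset_univ,
    sum_powerset_apply_card (fun k => if k ≤ i then f k else 0), card_univ]
  simp only [smul_ite, smul_zero]
  rw [← sum_filter]
  congr 1
  ext k
  simp only [mem_filter, mem_range]
  omega

theorem Fin.sum_val_add_one_sq (N : ℕ) :
    ∑ i : Fin N, ((i : ℝ) + 1) ^ 2 = (N : ℝ) * (N + 1) * (2 * N + 1) / 6 := by
  rw [Fin.sum_univ_eq_sum_range (fun i => ((i : ℝ) + 1) ^ 2)]
  induction N with
  | zero => simp
  | succ n ih => rw [sum_range_succ, ih]; push_cast; ring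

theorem integral_sq_sub_prod {α β : Type*} [MeasurableSpace α] [MeasurableSpace β]
    {P : Measure α} {Q : Measure β} [IsProbabilityMeasure P] [IsProbabilityMeasure Q]
    {f : α → ℝ} {g : β → ℝ} (hf : MemLp f 2 P) (hg : MemLp g 2 Q) :
    ∫ z, (f z.1 - g z.2) ^ 2 ∂(P.prod Q) = Var[f; P] + Var[g; Q] + (P[f] - Q[g]) ^ 2 := by
  have hf2 : Integrable (fun z : α × β => f z.1 ^ 2) (P.prod Q) := hf.integrable_sq.comp_fst Q
  have hg2 : Integrable (fun z : α × β => g z.2 ^ 2) (P.prod Q) := hg.integrable_sq.comp_snd P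
  have hfg : Integrable (fun z : α × β => f z.1 * g z.2) (P.prod Q) :=
    (hf.integrable one_le_two).mul_prod (hg.integrable one_le_two)
  calc ∫ z, (f z.1 - g z.2) ^ 2 ∂(P.prod Q)
      = ∫ z, (f z.1 ^ 2 + g z.2 ^ 2 - 2 * (f z.1 * g z.2)) ∂(P.prod Q) := by
        congr 1 with z; ring
    _ = ∫ x, f x ^ 2 ∂P + ∫ y, g y ^ 2 ∂Q - 2 * (P[f] * Q[g]) := by
        rw [integral_sub (hf2.fun_add hg2) (hfg.const_mul 2), integral_add hf2 hg2,
          integral_const_mul, integral_fun_fst (fun x => f x ^ 2),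
          integral_fun_snd (fun y => g y ^ 2), integral_prod_mul]
        simp
    _ = Var[f; P] + Var[g; Q] + (P[f] - Q[g]) ^ 2 := by
        rw [variance_eq_sub hf, variance_eq_sub hg]
        simp only [Pi.pow_apply]
        ring

section LowerIndices

variable {ι : Type*} [Fintype ι]

noncomputable def lowerIndices (x : ι → ℝ) (t : ℝ) : Finset ι := {j | x j ≤ t}

theorem setOf_lowerIndices_eq [DecidableEq ι] (t : ℝ) (S : Finset ι) :
    {x : ι → ℝ | lowerIndices x t = S} =
      Set.univ.pi fun j => if j ∈ S then Set.Iic t else Set.Ioi t := by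
  ext x
  simp only [Set.mem_ofPred_eq, Set.mem_pi, Set.mem_univ, true_imp_iff, Finset.ext_iff,
    lowerIndices, mem_filter, mem_univ, true_and]
  refine forall_congr' fun j => ?_
  split_ifs with hj <;> simp [hj]

theorem measurableSet_setOf_lowerIndices_eq (t : ℝ) (S : Finset ι) :
    MeasurableSet {x : ι → ℝ | lowerIndices x t = S} := by
  classical
  rw [setOf_lowerIndices_eq]
  exact .univ_pi fun j => by split_ifs; exacts [measurableSet_Iic, measurableSet_Ioi]

theorem measureReal_setOf_lowerIndices_eq (ν : Measure ℝ) [IsProbabilityMeasure ν] (t : ℝ)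
    (S : Finset ι) :
    (Measure.pi fun _ : ι => ν).real {x | lowerIndices x t = S} =
      ν.real (Set.Iic t) ^ #S * ν.real (Set.Ioi t) ^ (Fintype.card ι - #S) := by
  classical
  rw [setOf_lowerIndices_eq, measureReal_def, Measure.pi_pi, ENNReal.toReal_prod]
  simp only [apply_ite, prod_ite, filter_mem_eq_inter, univ_inter, prod_const, measureReal_def,
    filter_not, card_sdiff, card_univ, inter_univ]

end LowerIndices

section OrderStatistics

variable {N : ℕ}

theorem lt_orderStat_iff (x : Fin N → ℝ) (i : Fin N) (t : ℝ) :
    t < orderStat x i ↔ #(lowerIndices x t) ≤ i := by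
  have : #(lowerIndices x t) = #{k | orderStat x k ≤ t} :=
    card_equiv (Tuple.sort x).symm fun j => by
      rw [mem_filter]; simp [lowerIndices, orderStat]
  rw [this]
  exact (Tuple.monotone_sort x).lt_iff_card_filter_le i t

theorem sum_comp_orderStat {M : Type*} [AddCommMonoid M] (g : ℝ → M) (x : Fin N → ℝ) :
    ∑ i, g (orderStat x i) = ∑ j, g (x j) :=
  Equiv.sum_comp (Tuple.sort x) (g ∘ x)

theorem setOf_lt_orderStat (i : Fin N) (t : ℝ) :
    {x : Fin N → ℝ | t < orderStat x i} =
      (fun x => lowerIndices x t) ⁻¹' ↑({S | #S ≤ i} : Finset (Finset (Fin N))) := by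
  ext x
  simp [lt_orderStat_iff]

theorem measurable_orderStat (i : Fin N) : Measurable fun x : Fin N → ℝ => orderStat x i := by
  refine measurable_of_Ioi fun t => ?_
  change MeasurableSet {x | t < orderStat x i}
  rw [setOf_lt_orderStat, ← set_biUnion_preimage_singleton]
  exact measurableSet_biUnion _ fun S _ => measurableSet_setOf_lowerIndices_eq t S

theorem measureReal_lt_orderStat (ν : Measure ℝ) [IsProbabilityMeasure ν] (i : Fin N) (t : ℝ) :
    (Measure.pi fun _ : Fin N => ν).real {x | t < orderStat x i} =
      ∑ k ∈ range (i + 1),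
        (N.choose k : ℝ) * (ν.real (Set.Iic t) ^ k * ν.real (Set.Ioi t) ^ (N - k)) := by
  rw [setOf_lt_orderStat, ← sum_measureReal_preimage_singleton _
    fun S _ => measurableSet_setOf_lowerIndices_eq t S]
  simp only [Set.preimage, Set.mem_singleton_iff, measureReal_setOf_lowerIndices_eq,
    Fintype.card_fin]
  rw [sum_filter_card_le (fun k => ν.real (Set.Iic t) ^ k * ν.real (Set.Ioi t) ^ (N - k))
    (by simp [i.is_le']), Fintype.card_fin]
  simp only [nsmul_eq_mul]

theorem measureReal_Iic_unifIcc {t : ℝ} (ht : t ∈ Set.Icc (0 : ℝ) 1) :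
    (unifIcc).real (Set.Iic t) = t := by
  rw [measureReal_restrict_apply measurableSet_Iic, Set.inter_comm, ← Set.Ici_inter_Iic,
    Set.inter_assoc, Set.Iic_inter_Iic, inf_eq_right.mpr ht.2, Set.Ici_inter_Iic,
    Real.volume_real_Icc_of_le ht.1, sub_zero]

theorem measureReal_Ioi_unifIcc {t : ℝ} (ht : t ∈ Set.Icc (0 : ℝ) 1) :
    (unifIcc).real (Set.Ioi t) = 1 - t := by
  rw [← Set.compl_Iic, measureReal_compl measurableSet_Iic, probReal_univ,
    measureReal_Iic_unifIcc ht]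

theorem ae_orderStat_mem_Icc (i : Fin N) :
    ∀ᵐ x ∂(Measure.pi fun _ : Fin N => unifIcc), orderStat x i ∈ Set.Icc (0 : ℝ) 1 := by
  have : ∀ᵐ x ∂(Measure.pi fun _ : Fin N => unifIcc), ∀ j, x j ∈ Set.Icc (0 : ℝ) 1 :=
    ae_all_iff.mpr fun j => (measurePreserving_eval _ j).quasiMeasurePreserving.ae
      (ae_restrict_mem measurableSet_Icc)
  filter_upwards [this] with x hx using hx _

theorem memLp_orderStat (i : Fin N) (p : ENNReal) :
    MemLp (fun x => orderStat x i) p (Measure.pi fun _ : Fin N => unifIcc) :=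
  .of_bound (measurable_orderStat i).aestronglyMeasurable 1 <|
    (ae_orderStat_mem_Icc i).mono fun _ hx => by
      rw [Real.norm_eq_abs, abs_le]; constructor <;> linarith [hx.1, hx.2]

theorem integral_orderStat (i : Fin N) :
    ∫ x, orderStat x i ∂(Measure.pi fun _ : Fin N => unifIcc) = (i + 1) / (N + 1) := by
  have hint := memLp_one_iff_integrable.mp (memLp_orderStat i 1)
  rw [hint.integral_eq_integral_meas_lt ((ae_orderStat_mem_Icc i).mono fun _ hx => hx.1),
    setIntegral_eq_of_subset_of_forall_sdiff_eq_zero measurableSet_Ioi Set.Ioc_subset_Ioi_self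
      ?vanish, ← intervalIntegral.integral_of_le zero_le_one,
    intervalIntegral.integral_congr (g := fun t =>
      ∑ k ∈ range (i + 1), (N.choose k : ℝ) * (t ^ k * (1 - t) ^ (N - k))) ?slice,
    intervalIntegral.integral_finsetSum fun k _ =>
      (by fun_prop : Continuous _).intervalIntegrable _ _,
    sum_congr rfl fun k hk => integral_choose_mul_pow_mul_one_sub_pow
      (by have := i.isLt; simp at hk; omega)]
  · simp [div_eq_mul_inv]
  case vanish =>
    rintro t ⟨ht, ht'⟩
    have ht1 : 1 < t := by simp_all
    rw [measureReal_def, ENNReal.toReal_eq_zero_iff]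
    refine Or.inl (measure_mono_null ?_ (ae_iff.mp (ae_orderStat_mem_Icc i)))
    intro x (hx : t < orderStat x i) hmem
    exact (hmem.2.trans_lt ht1).not_gt hx
  case slice =>
    intro t ht
    rw [Set.uIcc_of_le zero_le_one] at ht
    simp only [measureReal_lt_orderStat, measureReal_Iic_unifIcc ht, measureReal_Ioi_unifIcc ht]

theorem sum_integral_orderStat_sq :
    ∑ i : Fin N, ∫ x, orderStat x i ^ 2 ∂(Measure.pi fun _ : Fin N => unifIcc) = N / 3 := by
  have hsq : ∫ t, t ^ 2 ∂unifIcc = 1 / 3 := by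
    rw [integral_Icc_eq_integral_Ioc, ← intervalIntegral.integral_of_le zero_le_one, integral_pow]
    norm_num
  have hint : Integrable (fun t : ℝ => t ^ 2) unifIcc := (continuous_pow 2).integrableOn_Icc
  have hj : ∀ j : Fin N, ∫ x, x j ^ 2 ∂(Measure.pi fun _ : Fin N => unifIcc) = 1 / 3 := fun j =>
    (integral_comp_eval (μ := fun _ : Fin N => unifIcc) (i := j) (f := fun t : ℝ => t ^ 2)
      hint.aestronglyMeasurable).trans hsq
  rw [← integral_finsetSum _ fun i _ => (memLp_orderStat i 2).integrable_sq]
  simp_rw [sum_comp_orderStat (· ^ 2)]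
  rw [integral_finsetSum _ fun j _ => integrable_comp_eval (i := j) hint]
  simp [hj, div_eq_mul_inv]

theorem sum_variance_orderStat :
    ∑ i : Fin N, Var[fun x => orderStat x i; Measure.pi fun _ : Fin N => unifIcc] =
      N / (6 * (N + 1)) := by
  simp_rw [variance_eq_sub (memLp_orderStat _ 2), sum_sub_distrib, Pi.pow_apply,
    sum_integral_orderStat_sq, integral_orderStat, div_pow, ← sum_div, Fin.sum_val_add_one_sq]
  field_simp
  ring

theorem integral_matchingCostSq (μ : Equiv.Perm (Fin N)) :
    ∫ q, matchingCostSq N μ q ∂unifPair N =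
      N / (3 * (N + 1)) + (∑ i : Fin N, ((i : ℝ) - μ i) ^ 2) / (N + 1) ^ 2 := by
  have hterm : ∀ i, ∫ q, (orderStat q.1 i - orderStat q.2 (μ i)) ^ 2 ∂unifPair N =
      Var[fun x => orderStat x i; Measure.pi fun _ : Fin N => unifIcc]
        + Var[fun x => orderStat x (μ i); Measure.pi fun _ : Fin N => unifIcc]
        + ((i : ℝ) - μ i) ^ 2 / (N + 1) ^ 2 := fun i => by
    rw [unifPair, integral_sq_sub_prod (memLp_orderStat i 2) (memLp_orderStat (μ i) 2),
      integral_orderStat, integral_orderStat]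
    field_simp
    ring
  have hint : ∀ i, Integrable (fun q => (orderStat q.1 i - orderStat q.2 (μ i)) ^ 2) (unifPair N) :=
    fun i => (((memLp_orderStat i 2).comp_fst _).sub
      ((memLp_orderStat (μ i) 2).comp_snd _)).integrable_sq
  simp only [matchingCostSq]
  rw [integral_finsetSum _ fun i _ => hint i]
  simp_rw [hterm, sum_add_distrib,
    Equiv.sum_comp μ (fun j => Var[fun x => orderStat x j; Measure.pi fun _ : Fin N => unifIcc]),
    sum_variance_orderStat, ← sum_div]
  field_simp
  ring

end OrderStatistics

section Displacement

variable {N : ℕ}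

theorem sum_sq_sub_eq_card_support (μ : Equiv.Perm (Fin N)) (h : ∀ i, |(μ i : ℤ) - i| ≤ 1) :
    ∑ i : Fin N, ((i : ℝ) - μ i) ^ 2 = #μ.support := by
  have hterm : ∀ i : Fin N, ((i : ℝ) - μ i) ^ 2 = if μ i ≠ i then 1 else 0 := fun i => by
    split_ifs with hi
    · have hne : (μ i : ℤ) ≠ i := by exact_mod_cast Fin.val_ne_of_ne hi
      have : (μ i : ℤ) - i = 1 ∨ (μ i : ℤ) - i = -1 := by have := abs_le.mp (h i); omega
      have hsq : ((i : ℤ) - μ i) ^ 2 = 1 := by rcases this with h1 | h1 <;> nlinarith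
      exact_mod_cast hsq
    · simp [not_not.mp hi]
  simp_rw [hterm, sum_boole]
  rfl

theorem sum_sq_sub_conj_eq_card_support (σ ρ : Equiv.Perm (Fin N)) (h : ∀ j, |(σ (ρ j) : ℤ) - σ j| ≤ 1) :
    ∑ i : Fin N, ((i : ℝ) - (σ * ρ * σ⁻¹) i) ^ 2 = #ρ.support := by
  rw [sum_sq_sub_eq_card_support _ fun i => by simpa using h (σ⁻¹ i),
    Equiv.Perm.card_support_conj]

end Displacement

section CrissCross

variable {N : ℕ}

theorem sigmaTilde_val (j : Fin N) :
    (sigmaTilde N j : ℕ) = if 2 * (j : ℕ) < N then 2 * (j : ℕ) else 2 * (N - 1 - j) + 1 := by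
  simp only [sigmaTilde, Equiv.ofBijective_apply]
  split_ifs <;> rfl

theorem abs_sigmaTilde_revPerm_sub_le (j : Fin N) :
    |(sigmaTilde N (Fin.revPerm j) : ℤ) - sigmaTilde N j| ≤ 1 := by
  simp only [Fin.revPerm_apply, sigmaTilde_val, Fin.val_rev]
  rw [abs_le]
  split_ifs <;> omega

theorem abs_sigmaTilde_revPerm_mul_finRotate_inv_sub_le (j : Fin N) :
    |(sigmaTilde N ((Fin.revPerm * (finRotate N)⁻¹ : Equiv.Perm (Fin N)) j) : ℤ)
      - sigmaTilde N j| ≤ 1 := by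
  obtain ⟨k, rfl⟩ := (finRotate N).surjective j
  cases N with
  | zero => exact k.elim0
  | succ n =>
    simp only [Equiv.Perm.mul_apply, Equiv.Perm.inv_def, Equiv.symm_apply_apply,
      Fin.revPerm_apply, sigmaTilde_val, Fin.val_rev, coe_finRotate]
    rw [abs_le]
    split_ifs <;> simp_all [Fin.ext_iff] <;> omega

theorem card_support_revPerm : #(Fin.revPerm : Equiv.Perm (Fin N)).support = 2 * (N / 2) := by
  rcases Nat.even_or_odd' N with ⟨m, rfl | rfl⟩
  · have : (Fin.revPerm : Equiv.Perm (Fin (2 * m))).support = univ := by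
      ext i; simp [Equiv.Perm.mem_support, Fin.ext_iff]; omega
    rw [this, card_univ, Fintype.card_fin]; omega
  · have : (Fin.revPerm : Equiv.Perm (Fin (2 * m + 1))).support = univ.erase ⟨m, by omega⟩ := by
      ext i; simp [Equiv.Perm.mem_support, Fin.ext_iff]; omega
    rw [this, card_erase_of_mem (mem_univ _), card_univ, Fintype.card_fin]; omega

theorem card_support_revPerm_mul_finRotate_inv :
    #(Fin.revPerm * (finRotate N)⁻¹).support = 2 * ((N - 1) / 2) := by
  rcases N with _ | n
  · rfl
  have hfix : ∀ i : Fin (n + 1), (Fin.revPerm * (finRotate (n + 1))⁻¹ : Equiv.Perm _) i = i ↔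
      (i : ℕ) = 0 ∨ 2 * (i : ℕ) = n + 1 := by
    intro i
    rw [Equiv.Perm.mul_apply, Fin.revPerm_apply, Fin.rev_eq_iff, Equiv.Perm.inv_eq_iff_eq,
      Fin.ext_iff, coe_finRotate]
    have := i.isLt
    split_ifs with h <;> simp only [Fin.ext_iff, Fin.val_rev, Fin.val_last] at h ⊢ <;> omega
  rcases Nat.even_or_odd' n with ⟨m, rfl | rfl⟩
  · have : (Fin.revPerm * (finRotate (2 * m + 1))⁻¹).support = univ.erase 0 := by
      ext i
      rw [Equiv.Perm.mem_support, ne_eq, hfix, mem_erase, ne_eq, Fin.ext_iff, Fin.val_zero]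
      simp only [mem_univ, and_true]
      omega
    rw [this, card_erase_of_mem (mem_univ _), card_univ, Fintype.card_fin]; omega
  · have : (Fin.revPerm * (finRotate (2 * m + 1 + 1))⁻¹).support =
        (univ.erase 0).erase ⟨m + 1, by omega⟩ := by
      ext i
      rw [Equiv.Perm.mem_support, ne_eq, hfix, mem_erase, mem_erase, ne_eq, ne_eq, Fin.ext_iff,
        Fin.ext_iff, Fin.val_zero]
      simp only [mem_univ, and_true]
      omega
    rw [this, card_erase_of_mem (mem_erase.mpr ⟨by simp [Fin.ext_iff], mem_univ _⟩),
      card_erase_of_mem (mem_univ _), card_univ, Fintype.card_fin]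
    omega

theorem integral_matchingCostSq_piTilde_mul_sigmaTilde_inv (N : ℕ) :
    ∫ q, matchingCostSq N (piTilde N * (sigmaTilde N)⁻¹) q ∂unifPair N =
      N / (3 * (N + 1)) + ((2 * (N / 2) : ℕ) : ℝ) / (N + 1) ^ 2 := by
  rw [integral_matchingCostSq, piTilde,
    sum_sq_sub_conj_eq_card_support _ _ abs_sigmaTilde_revPerm_sub_le, card_support_revPerm]

theorem integral_matchingCostSq_piTilde_mul_finRotate_inv_mul_sigmaTilde_inv (N : ℕ) :
    ∫ q, matchingCostSq N (piTilde N * (finRotate N)⁻¹ * (sigmaTilde N)⁻¹) q ∂unifPair N =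
      N / (3 * (N + 1)) + ((2 * ((N - 1) / 2) : ℕ) : ℝ) / (N + 1) ^ 2 := by
  rw [integral_matchingCostSq, piTilde, mul_assoc (sigmaTilde N),
    sum_sq_sub_conj_eq_card_support _ _ abs_sigmaTilde_revPerm_mul_finRotate_inv_sub_le,
    card_support_revPerm_mul_finRotate_inv]

end CrissCross

/-- **Average costs of the two criss-cross matchings.**  Decompose the criss-cross
cycle into the matchings `μ̃₁ = π̃∘σ̃⁻¹` and `μ̃₂ = π̃∘τ⁻¹∘σ̃⁻¹` (`τ = finRotate N`).
For points uniform on `[0,1]`: if `N` is odd then both matchings have average cost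
`(N² + 4N − 3)/(3(N+1)²)`; if `N` is even then the matching with two fixed points,
`μ̃₂`, has average cost `(N² + 4N − 6)/(3(N+1)²)` while the matching with no fixed
points, `μ̃₁`, has average cost `(N² + 4N)/(3(N+1)²)`. -/
theorem average_crisscross_matching_costs (N : ℕ) (hN : 1 ≤ N) :
    (Odd N →
      (∫ q, matchingCostSq N (piTilde N * (sigmaTilde N)⁻¹) q ∂(unifPair N)
          = ((N : ℝ) ^ 2 + 4 * N - 3) / (3 * ((N : ℝ) + 1) ^ 2)) ∧
      (∫ q, matchingCostSq N (piTilde N * (finRotate N)⁻¹ * (sigmaTilde N)⁻¹) q ∂(unifPair N)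
          = ((N : ℝ) ^ 2 + 4 * N - 3) / (3 * ((N : ℝ) + 1) ^ 2))) ∧
    (Even N →
      (∫ q, matchingCostSq N (piTilde N * (finRotate N)⁻¹ * (sigmaTilde N)⁻¹) q ∂(unifPair N)
          = ((N : ℝ) ^ 2 + 4 * N - 6) / (3 * ((N : ℝ) + 1) ^ 2)) ∧
      (∫ q, matchingCostSq N (piTilde N * (sigmaTilde N)⁻¹) q ∂(unifPair N)
          = ((N : ℝ) ^ 2 + 4 * N) / (3 * ((N : ℝ) + 1) ^ 2))) := by
  rw [integral_matchingCostSq_piTilde_mul_sigmaTilde_inv,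
    integral_matchingCostSq_piTilde_mul_finRotate_inv_mul_sigmaTilde_inv]
  refine ⟨fun ⟨m, hm⟩ => ?_, fun ⟨m, hm⟩ => ?_⟩
  · subst hm
    rw [show (2 * m + 1) / 2 = m by omega, show (2 * m + 1 - 1) / 2 = m by omega]
    push_cast
    constructor <;> field_simp <;> ring
  · obtain ⟨k, rfl⟩ : ∃ k, m = k + 1 := ⟨m - 1, by omega⟩
    subst hm
    rw [show (k + 1 + (k + 1)) / 2 = k + 1 by omega, show (k + 1 + (k + 1) - 1) / 2 = k by omega]
    push_cast
    constructor <;> field_simp <;> ring
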